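/- arXiv:1611.10164 — 2 statements merged into one kernel-verified Lean document; each statement's English description precedes it below -/
import Mathlib

section
/- Let P, Q₀ ∈ ℝ^{n×n} be symmetric with Q₀ positive semidefinite, R₀ ∈ ℝ^{m×m} symmetric positive definite, A ∈ ℝ^{n×n}, B ∈ ℝ^{n×m}, α ∈ (0,1). Suppose the block matrix S = [[−P + Q₀ + α AᵀPA, α AᵀPB],[α BᵀPA, R₀ + α BᵀPB]] is positive semidefinite and the block matrix Z = [[Z_{xx}, Z_{xu}],[Z_{xu}ᵀ, Z_{uu}]] is positive semidefinite with Z_{xx} positive definite, and Z·S = 0. Then −P + Q₀ + α AᵀPA − α² AᵀPB (R₀ + α BᵀPB)^{-1} BᵀPA = 0. -/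
/-!
The first block row of `Z * S = 0` reads `Zxx * S₁₁ + Zxu * S₂₁ = 0` and
`Zxx * S₁₂ + Zxu * S₂₂ = 0`. Eliminating `Zxu` with the second equation turns the first into
`Zxx * (S₁₁ - S₁₂ * S₂₂⁻¹ * S₂₁) = 0`; as `Zxx` is invertible, the Schur complement of `S₂₂` in
`S`, which is the Riccati residual, vanishes.
-/

open Matrix

namespace Matrix

variable {n m o k R : Type*} [Fintype n] [DecidableEq n] [Fintype m] [DecidableEq m]
  [CommRing R]

theorem sub_mul_inv_mul_eq_zero_of_block_row_eq_zero
    {Z₁₁ : Matrix n n R} {Z₁₂ : Matrix n m R}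
    {S₁₁ : Matrix n k R} {S₁₂ : Matrix n m R} {S₂₁ : Matrix m k R} {S₂₂ : Matrix m m R}
    (h₁ : Z₁₁ * S₁₁ + Z₁₂ * S₂₁ = 0) (h₂ : Z₁₁ * S₁₂ + Z₁₂ * S₂₂ = 0)
    (hZ : IsUnit Z₁₁.det) (hS : IsUnit S₂₂.det) :
    S₁₁ - S₁₂ * S₂₂⁻¹ * S₂₁ = 0 := by
  have hZ₁₂ : Z₁₂ = -(Z₁₁ * S₁₂) * S₂₂⁻¹ := by
    rw [← eq_neg_of_add_eq_zero_right h₂, Matrix.mul_nonsing_inv_cancel_right _ _ hS]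
  have hZ_schur : Z₁₁ * (S₁₁ - S₁₂ * S₂₂⁻¹ * S₂₁) = 0 := by
    rw [Matrix.mul_sub, ← h₁, hZ₁₂]
    simp only [Matrix.neg_mul, Matrix.mul_assoc]
    abel
  simpa [← Matrix.mul_assoc, Matrix.nonsing_inv_mul _ hZ] using congrArg (Z₁₁⁻¹ * ·) hZ_schur

theorem sub_mul_inv_mul_eq_zero_of_fromBlocks_mul_eq_zero
    {Z₁₁ : Matrix n n R} {Z₁₂ : Matrix n m R} {Z₂₁ : Matrix o n R} {Z₂₂ : Matrix o m R}
    {S₁₁ : Matrix n k R} {S₁₂ : Matrix n m R} {S₂₁ : Matrix m k R} {S₂₂ : Matrix m m R}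
    (h : fromBlocks Z₁₁ Z₁₂ Z₂₁ Z₂₂ * fromBlocks S₁₁ S₁₂ S₂₁ S₂₂ = 0)
    (hZ : IsUnit Z₁₁.det) (hS : IsUnit S₂₂.det) :
    S₁₁ - S₁₂ * S₂₂⁻¹ * S₂₁ = 0 := by
  rw [fromBlocks_multiply, ← fromBlocks_zero, fromBlocks_inj] at h
  exact sub_mul_inv_mul_eq_zero_of_block_row_eq_zero h.1 h.2.1 hZ hS

end Matrix

theorem stmt_4_general {n m : ℕ} (α : ℝ)
    (P Q₀ A : Matrix (Fin n) (Fin n) ℝ) (B : Matrix (Fin n) (Fin m) ℝ)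
    (R₀ : Matrix (Fin m) (Fin m) ℝ)
    (Zxx : Matrix (Fin n) (Fin n) ℝ) (Zxu : Matrix (Fin n) (Fin m) ℝ)
    (Zuu : Matrix (Fin m) (Fin m) ℝ)
    (hZxx : Zxx.PosDef)
    (hRinv : (R₀ + α • (Bᵀ * P * B)).PosDef)
    (hcs : (Matrix.fromBlocks Zxx Zxu Zxuᵀ Zuu) *
      (Matrix.fromBlocks (-P + Q₀ + α • (Aᵀ * P * A)) (α • (Aᵀ * P * B))
        (α • (Bᵀ * P * A)) (R₀ + α • (Bᵀ * P * B))) = 0) :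
    -P + Q₀ + α • (Aᵀ * P * A) -
      (α ^ 2) • (Aᵀ * P * B * (R₀ + α • (Bᵀ * P * B))⁻¹ * (Bᵀ * P * A)) = 0 := by
  have hschur := sub_mul_inv_mul_eq_zero_of_fromBlocks_mul_eq_zero hcs
    ((isUnit_iff_isUnit_det _).mp hZxx.isUnit) ((isUnit_iff_isUnit_det _).mp hRinv.isUnit)
  simpa only [Matrix.smul_mul, Matrix.mul_smul, smul_smul, ← pow_two] using hschur

theorem stmt_4 {n m : ℕ} (α : ℝ) (hα : α ∈ Set.Ioo (0:ℝ) 1)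
    (P Q₀ A : Matrix (Fin n) (Fin n) ℝ) (B : Matrix (Fin n) (Fin m) ℝ)
    (R₀ : Matrix (Fin m) (Fin m) ℝ)
    (Zxx : Matrix (Fin n) (Fin n) ℝ) (Zxu : Matrix (Fin n) (Fin m) ℝ)
    (Zuu : Matrix (Fin m) (Fin m) ℝ)
    (hP : P.IsSymm) (hQ₀ : Q₀.PosSemidef) (hR₀ : R₀.PosDef)
    (hS : (Matrix.fromBlocks (-P + Q₀ + α • (Aᵀ * P * A)) (α • (Aᵀ * P * B))
      (α • (Bᵀ * P * A)) (R₀ + α • (Bᵀ * P * B))).PosSemidef)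
    (hZ : (Matrix.fromBlocks Zxx Zxu Zxuᵀ Zuu).PosSemidef)
    (hZxx : Zxx.PosDef)
    (hRinv : (R₀ + α • (Bᵀ * P * B)).PosDef)
    (hcs : (Matrix.fromBlocks Zxx Zxu Zxuᵀ Zuu) *
      (Matrix.fromBlocks (-P + Q₀ + α • (Aᵀ * P * A)) (α • (Aᵀ * P * B))
        (α • (Bᵀ * P * A)) (R₀ + α • (Bᵀ * P * B))) = 0) :
    -P + Q₀ + α • (Aᵀ * P * A) -
      (α ^ 2) • (Aᵀ * P * B * (R₀ + α • (Bᵀ * P * B))⁻¹ * (Bᵀ * P * A)) = 0 :=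
  stmt_4_general α P Q₀ A B R₀ Zxx Zxu Zuu hZxx hRinv hcs
end

section
/- Under the same hypotheses (S ⪰ 0, Z ⪰ 0, Z_{xx} ≻ 0, R₀ + α BᵀPB ≻ 0, and Z·S = 0), the feedback gain satisfies Z_{xu}ᵀ Z_{xx}^{-1} = −α (R₀ + α BᵀPB)^{-1} BᵀPA, and moreover Z_{uu} = Z_{xu}ᵀ Z_{xx}^{-1} Z_{xu}. -/
/-!
Only the off-diagonal and lower-right blocks of `Z * S = 0` are needed. The upper-right block
`Zxx S₁₂ + Zxu S₂₂ = 0` expresses `Zxu` through `Zxx`, and transposing it (all of `Zxx`, `S₂₂`, `P`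
are symmetric) yields the gain `Zxuᵀ Zxx⁻¹ = -S₂₂⁻¹ S₁₂ᵀ` with `S₁₂ᵀ = α BᵀPA`. Feeding
`S₁₂ = -Zxx⁻¹ Zxu S₂₂` into the lower-right block `Zxuᵀ S₁₂ + Zuu S₂₂ = 0` and cancelling the
invertible `S₂₂` gives `Zuu = Zxuᵀ Zxx⁻¹ Zxu`.
-/

open Matrix

namespace Matrix

variable {l m R : Type*} [Fintype l] [DecidableEq l] [Fintype m] [DecidableEq m] [CommRing R]
  {Zxx : Matrix l l R} {Zxu S₁₂ : Matrix l m R} {Zuu S₂₂ : Matrix m m R}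

theorem transpose_mul_inv_eq_of_mul_add_mul_eq_zero (hZxx : Zxx.IsSymm) (hS₂₂ : S₂₂.IsSymm)
    (hZxx_det : IsUnit Zxx.det) (hS₂₂_det : IsUnit S₂₂.det)
    (h : Zxx * S₁₂ + Zxu * S₂₂ = 0) : Zxuᵀ * Zxx⁻¹ = -(S₂₂⁻¹ * S₁₂ᵀ) := by
  have hZxu : Zxu = -(Zxx * S₁₂) * S₂₂⁻¹ := by
    rw [← eq_neg_of_add_eq_zero_right h, mul_nonsing_inv_cancel_right _ _ hS₂₂_det]
  rw [hZxu, transpose_mul, transpose_neg, transpose_mul, transpose_nonsing_inv, hS₂₂.eq, hZxx.eq,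
    Matrix.mul_neg, Matrix.neg_mul, ← Matrix.mul_assoc, mul_nonsing_inv_cancel_right _ _ hZxx_det]

theorem eq_transpose_mul_inv_mul_of_mul_add_mul_eq_zero (hZxx_det : IsUnit Zxx.det)
    (hS₂₂_det : IsUnit S₂₂.det) (h₁₂ : Zxx * S₁₂ + Zxu * S₂₂ = 0)
    (h₂₂ : Zxuᵀ * S₁₂ + Zuu * S₂₂ = 0) : Zuu = Zxuᵀ * Zxx⁻¹ * Zxu := by
  have hS₁₂ : S₁₂ = -(Zxx⁻¹ * Zxu * S₂₂) := by
    rw [← nonsing_inv_mul_cancel_left _ S₁₂ hZxx_det, eq_neg_of_add_eq_zero_left h₁₂]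
    simp only [Matrix.mul_neg, Matrix.mul_assoc]
  have hZuu : Zuu * S₂₂ = Zxuᵀ * Zxx⁻¹ * Zxu * S₂₂ := by
    rw [eq_neg_of_add_eq_zero_right h₂₂, hS₁₂, Matrix.mul_neg, neg_neg]
    simp only [Matrix.mul_assoc]
  rw [← mul_nonsing_inv_cancel_right _ Zuu hS₂₂_det, hZuu,
    mul_nonsing_inv_cancel_right _ _ hS₂₂_det]

end Matrix

theorem Matrix.IsSymm.transpose_transpose_mul_mul {n k : Type*} [Fintype n] {R : Type*}
    [CommRing R] {P : Matrix n n R} (hP : P.IsSymm) (A : Matrix n n R) (B : Matrix n k R) :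
    (Aᵀ * P * B)ᵀ = Bᵀ * P * A := by
  rw [transpose_mul, transpose_mul, transpose_transpose, hP.eq, Matrix.mul_assoc]

theorem stmt_5_general {n m : ℕ} (α : ℝ)
    (P Q₀ A : Matrix (Fin n) (Fin n) ℝ) (B : Matrix (Fin n) (Fin m) ℝ)
    (R₀ : Matrix (Fin m) (Fin m) ℝ)
    (Zxx : Matrix (Fin n) (Fin n) ℝ) (Zxu : Matrix (Fin n) (Fin m) ℝ)
    (Zuu : Matrix (Fin m) (Fin m) ℝ)
    (hP : P.IsSymm)
    (hZxx : Zxx.PosDef)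
    (hRinv : (R₀ + α • (Bᵀ * P * B)).PosDef)
    (hcs : (Matrix.fromBlocks Zxx Zxu Zxuᵀ Zuu) *
      (Matrix.fromBlocks (-P + Q₀ + α • (Aᵀ * P * A)) (α • (Aᵀ * P * B))
        (α • (Bᵀ * P * A)) (R₀ + α • (Bᵀ * P * B))) = 0) :
    Zxuᵀ * Zxx⁻¹ = -(α • ((R₀ + α • (Bᵀ * P * B))⁻¹ * (Bᵀ * P * A))) ∧
      Zuu = Zxuᵀ * Zxx⁻¹ * Zxu := by
  rw [fromBlocks_multiply, ← fromBlocks_zero, fromBlocks_inj] at hcs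
  obtain ⟨-, h₁₂, -, h₂₂⟩ := hcs
  have hZxx_det : IsUnit Zxx.det := hZxx.det_pos.ne'.isUnit
  have hS₂₂_det : IsUnit (R₀ + α • (Bᵀ * P * B)).det := hRinv.det_pos.ne'.isUnit
  refine ⟨?_, eq_transpose_mul_inv_mul_of_mul_add_mul_eq_zero hZxx_det hS₂₂_det h₁₂ h₂₂⟩
  rw [transpose_mul_inv_eq_of_mul_add_mul_eq_zero
    (isHermitian_iff_isSymm.mp hZxx.isHermitian) (isHermitian_iff_isSymm.mp hRinv.isHermitian)
    hZxx_det hS₂₂_det h₁₂, transpose_smul, hP.transpose_transpose_mul_mul, Matrix.mul_smul]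

theorem stmt_5 {n m : ℕ} (α : ℝ) (hα : α ∈ Set.Ioo (0:ℝ) 1)
    (P Q₀ A : Matrix (Fin n) (Fin n) ℝ) (B : Matrix (Fin n) (Fin m) ℝ)
    (R₀ : Matrix (Fin m) (Fin m) ℝ)
    (Zxx : Matrix (Fin n) (Fin n) ℝ) (Zxu : Matrix (Fin n) (Fin m) ℝ)
    (Zuu : Matrix (Fin m) (Fin m) ℝ)
    (hP : P.IsSymm) (hQ₀ : Q₀.PosSemidef) (hR₀ : R₀.PosDef)
    (hS : (Matrix.fromBlocks (-P + Q₀ + α • (Aᵀ * P * A)) (α • (Aᵀ * P * B))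
      (α • (Bᵀ * P * A)) (R₀ + α • (Bᵀ * P * B))).PosSemidef)
    (hZ : (Matrix.fromBlocks Zxx Zxu Zxuᵀ Zuu).PosSemidef)
    (hZxx : Zxx.PosDef)
    (hRinv : (R₀ + α • (Bᵀ * P * B)).PosDef)
    (hcs : (Matrix.fromBlocks Zxx Zxu Zxuᵀ Zuu) *
      (Matrix.fromBlocks (-P + Q₀ + α • (Aᵀ * P * A)) (α • (Aᵀ * P * B))
        (α • (Bᵀ * P * A)) (R₀ + α • (Bᵀ * P * B))) = 0) :
    Zxuᵀ * Zxx⁻¹ = -(α • ((R₀ + α • (Bᵀ * P * B))⁻¹ * (Bᵀ * P * A))) ∧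
      Zuu = Zxuᵀ * Zxx⁻¹ * Zxu :=
  stmt_5_general α P Q₀ A B R₀ Zxx Zxu Zuu hP hZxx hRinv hcs
end
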